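/- Let ε > 0. The radial function Φ : ℝ³ → ℝ defined by Φ(x) = (max(1 − ε‖x‖₂, 0))⁴ (4ε‖x‖₂ + 1) is of class C² on all of ℝ³ (twice continuously differentiable, including at the origin and across the sphere ‖x‖₂ = 1/ε). -/

import Mathlib

/-!
The kernel is `g (ε‖x‖)` for the profile `g t = (1 - t)₊⁴ (4t + 1)`, which is C³ on `ℝ` because
`(max u 0) ^ (n + 1)` is Cⁿ. Away from the origin the norm is smooth, so the composition is C².
Near the origin `ε‖x‖ < 1`, where `g t = 1 - 10t² + 20t³ - 15t⁴ + 4t⁵`: the even powers are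
polynomials in `‖x‖²`, and the odd ones are multiples of `‖x‖³`, which is C² because its gradient
`3‖x‖ x` is C¹.
-/

open Topology Asymptotics

theorem hasDerivAt_max_zero_pow (n : ℕ) (t : ℝ) :
    HasDerivAt (fun u : ℝ => max u 0 ^ (n + 2)) ((n + 2) * max t 0 ^ (n + 1)) t := by
  have off_zero : ∀ s ≠ (0 : ℝ),
      HasDerivAt (fun u : ℝ => max u 0 ^ (n + 2)) ((n + 2) * max s 0 ^ (n + 1)) s := by
    intro s hs
    rcases hs.lt_or_gt with hs | hs
    · have hzero : (fun u : ℝ => max u 0 ^ (n + 2)) =ᶠ[𝓝 s] fun _ => 0 := by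
        filter_upwards [gt_mem_nhds hs] with u hu
        simp [max_eq_right hu.le]
      simpa [max_eq_right hs.le] using (hasDerivAt_const s (0 : ℝ)).congr_of_eventuallyEq hzero
    · have hpow : (fun u : ℝ => max u 0 ^ (n + 2)) =ᶠ[𝓝 s] fun u => u ^ (n + 2) := by
        filter_upwards [lt_mem_nhds hs] with u hu
        rw [max_eq_left hu.le]
      simpa [max_eq_left hs.le] using (hasDerivAt_pow (n + 2) s).congr_of_eventuallyEq hpow
  rcases eq_or_ne t 0 with rfl | ht
  · exact hasDerivAt_of_hasDerivAt_of_ne off_zero (by fun_prop) (by fun_prop)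
  · exact off_zero t ht

theorem contDiff_max_zero_pow : ∀ n : ℕ, ContDiff ℝ n fun u : ℝ => max u 0 ^ (n + 1)
  | 0 => contDiff_zero.2 (by fun_prop)
  | n + 1 => by
    rw [Nat.cast_succ, contDiff_succ_iff_deriv]
    refine ⟨fun t => (hasDerivAt_max_zero_pow n t).differentiableAt, by simp, ?_⟩
    rw [funext fun t => (hasDerivAt_max_zero_pow n t).deriv]
    exact contDiff_const.mul (contDiff_max_zero_pow n)

def wendlandProfile (t : ℝ) : ℝ := max (1 - t) 0 ^ 4 * (4 * t + 1)

theorem contDiff_wendlandProfile : ContDiff ℝ 3 wendlandProfile :=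
  ((contDiff_max_zero_pow 3).comp (contDiff_const.sub contDiff_id)).mul (by fun_prop)

theorem wendlandProfile_of_le_one {t : ℝ} (ht : t ≤ 1) :
    wendlandProfile t = 1 - 10 * t ^ 2 + 20 * t ^ 3 - 15 * t ^ 4 + 4 * t ^ 5 := by
  rw [wendlandProfile, max_eq_left (sub_nonneg.2 ht)]
  ring

section InnerProductSpace

variable {F : Type*} [NormedAddCommGroup F] [InnerProductSpace ℝ F]

/-- At `x = 0` the second term vanishes, whatever the junk value of `fderiv ℝ (‖·‖) 0`. -/
theorem hasFDerivAt_norm_smul_self (x : F) :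
    HasFDerivAt (fun y : F => ‖y‖ • y)
      (‖x‖ • ContinuousLinearMap.id ℝ F + (fderiv ℝ (‖·‖) x).smulRight x) x := by
  rcases eq_or_ne x 0 with rfl | hx
  · refine .of_isLittleO ?_
    simp only [norm_zero, zero_smul, ContinuousLinearMap.smulRight_zero, add_zero, sub_zero,
      zero_apply]
    refine isLittleO_norm_left.1 ((isLittleO_norm_pow_id one_lt_two).congr_left fun y => ?_)
    rw [norm_smul, norm_norm, sq]
  · exact ((contDiffAt_norm ℝ hx).differentiableAt one_ne_zero).hasFDerivAt.smul
      (hasFDerivAt_id x)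

theorem continuous_fderiv_norm_smul_self :
    Continuous fun x : F =>
      ‖x‖ • ContinuousLinearMap.id ℝ F + (fderiv ℝ (‖·‖) x).smulRight x := by
  refine continuous_iff_continuousAt.2 fun x => ?_
  rcases eq_or_ne x 0 with rfl | hx
  · have hbound : ∀ y : F,
        ‖‖y‖ • ContinuousLinearMap.id ℝ F + (fderiv ℝ (‖·‖) y).smulRight y‖ ≤ 2 * ‖y‖ := by
      intro y
      have hid := ContinuousLinearMap.norm_id_le (𝕜 := ℝ) (E := F)
      have hnorm : ‖fderiv ℝ (‖·‖) y‖ ≤ 1 := by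
        simpa using norm_fderiv_le_of_lipschitz ℝ (x₀ := y) lipschitzWith_one_norm
      calc _ ≤ ‖y‖ * ‖ContinuousLinearMap.id ℝ F‖ + ‖fderiv ℝ (‖·‖) y‖ * ‖y‖ := by
            grw [norm_add_le, norm_smul, norm_norm, ContinuousLinearMap.norm_smulRight_apply]
        _ ≤ 2 * ‖y‖ := by nlinarith [norm_nonneg y]
    simp only [ContinuousAt, norm_zero, zero_smul, ContinuousLinearMap.smulRight_zero, add_zero]
    exact squeeze_zero_norm hbound (by simpa using (continuous_norm.tendsto (0 : F)).const_mul 2)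
  · exact (continuous_norm.continuousAt.smul continuousAt_const).add
      ((ContinuousLinearMap.smulRightL ℝ F F).continuous₂.continuousAt.comp
        (((contDiffAt_norm ℝ hx).continuousAt_fderiv one_ne_zero).prodMk continuousAt_id))

theorem contDiff_norm_smul_self : ContDiff ℝ 1 fun x : F => ‖x‖ • x :=
  contDiff_one_iff_hasFDerivAt.2
    ⟨_, continuous_fderiv_norm_smul_self, hasFDerivAt_norm_smul_self⟩

theorem contDiff_norm_pow_three : ContDiff ℝ 2 fun x : F => ‖x‖ ^ 3 := by
  have hderiv : ∀ x : F,
      HasFDerivAt (fun y : F => ‖y‖ ^ 3) ((3 : ℝ) • innerSL ℝ (‖x‖ • x)) x := by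
    intro x
    convert hasFDerivAt_norm_rpow x (p := 3) (by norm_num) using 1
    · ext y
      exact_mod_cast (Real.rpow_natCast ‖y‖ 3).symm
    · norm_num [map_smul, smul_smul]
  exact contDiff_succ_iff_hasFDerivAt.2
    ⟨_, ((innerSL ℝ).contDiff.comp contDiff_norm_smul_self).const_smul (3 : ℝ), hderiv⟩

theorem contDiff_wendlandProfile_comp_norm (ε : ℝ) :
    ContDiff ℝ 2 fun x : F => wendlandProfile (ε * ‖x‖) := by
  refine contDiff_iff_contDiffAt.2 fun x => ?_
  rcases eq_or_ne x 0 with rfl | hx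
  · have hpoly : ContDiff ℝ 2 fun x : F =>
        1 - 10 * ε ^ 2 * ‖x‖ ^ 2 + 20 * ε ^ 3 * ‖x‖ ^ 3 - 15 * ε ^ 4 * (‖x‖ ^ 2) ^ 2
          + 4 * ε ^ 5 * ‖x‖ ^ 2 * ‖x‖ ^ 3 := by
      have := contDiff_norm_sq ℝ (E := F) (n := 2)
      have := contDiff_norm_pow_three (F := F)
      fun_prop
    have hnear : ∀ᶠ y in 𝓝 (0 : F), ε * ‖y‖ < 1 :=
      (continuous_const.mul continuous_norm).continuousAt.eventually_lt continuousAt_const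
        (by simp)
    refine hpoly.contDiffAt.congr_of_eventuallyEq ?_
    filter_upwards [hnear] with y hy
    rw [wendlandProfile_of_le_one hy.le]
    ring
  · exact (contDiff_wendlandProfile.contDiffAt.of_le (by norm_num)).comp x
      (contDiffAt_const.mul (contDiffAt_norm ℝ hx))

end InnerProductSpace

theorem wendland_c2_radial_contDiff_general (ε : ℝ) :
    ContDiff ℝ 2 (fun x : EuclideanSpace ℝ (Fin 3) =>
      (max (1 - ε * ‖x‖) 0) ^ 4 * (4 * ε * ‖x‖ + 1)) := by
  simpa only [wendlandProfile, mul_assoc] using contDiff_wendlandProfile_comp_norm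
    (F := EuclideanSpace ℝ (Fin 3)) ε

/-- For any shape parameter `ε > 0`, the Wendland C² radial kernel
`Φ(x) = (1 - ε‖x‖₂)₊⁴ (4ε‖x‖₂ + 1)` is of class C² on all of `ℝ³`. -/
theorem wendland_c2_radial_contDiff (ε : ℝ) (hε : 0 < ε) :
    ContDiff ℝ 2 (fun x : EuclideanSpace ℝ (Fin 3) =>
      (max (1 - ε * ‖x‖) 0) ^ 4 * (4 * ε * ‖x‖ + 1)) :=
  wendland_c2_radial_contDiff_general ε
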